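/- arXiv:1803.05502 — 3 statements merged into one kernel-verified Lean document; each statement's English description precedes it below -/
import Mathlib

section
/- Let $\varepsilon \in (0,1)$, $\lambda > 0$, $M > 0$. Let $f : [0,\infty) \to \mathbb{R}$ be a measurable function satisfying $|f(\tau)| \le M (1+\tau)^{-\lambda}$ for almost every $\tau \ge 0$. Then for every real $a \ge 1$ and every $t \ge 1$, $\int_0^{t/2} a^{1-\varepsilon} e^{-(t-\tau) a} |f(\tau)| \, d\tau \le M \big( 4(1-\varepsilon)/e \big)^{1-\varepsilon} e^{-1/4} \, 2^{\lambda} \, d_1(\lambda, 1/2) \, (1+t)^{-\lambda}$, where $d_1(\lambda,\sigma) = 2^{\lambda} \big[ ((\lambda+1)/(e\sigma))^{\lambda+1} e^{\sigma} + 1/\sigma \big]$. -/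
/-!
On `(0, t/2]` the kernel is at most `a^{1-ε} e^{-ta/2}` and `|f| ≤ M`, so the integral is at
most `(t/2) M a^{1-ε} e^{-ta/2}`. Everything else is the elementary bound
`x^s e^{-σx} ≤ (s/(eσ))^s`, used twice: half of the exponential absorbs `a^{1-ε}` uniformly in
`a ≥ 1` and leaves `e^{-t/4}`, and `(1+t)^{λ+1} e^{-(1+t)/4} ≤ (4(λ+1)/e)^{λ+1}` trades
`t e^{-t/4}` for the decay `(1+t)^{-λ}`.
-/

open Real MeasureTheory intervalIntegral

noncomputable def d₁ (lam σ : ℝ) : ℝ :=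
  2 ^ lam * (((lam + 1) / (exp 1 * σ)) ^ (lam + 1) * exp σ + 1 / σ)

lemma rpow_mul_exp_neg_mul_le {s σ x : ℝ} (hs : 0 < s) (hσ : 0 < σ) (hx : 0 ≤ x) :
    x ^ s * exp (-(σ * x)) ≤ (s / (exp 1 * σ)) ^ s := by
  have hsplit : x ^ s * exp (-(σ * x)) = (x * exp (-(σ * x / s))) ^ s := by
    rw [mul_rpow hx (exp_pos _).le, ← exp_mul]
    field_simp
  have hbase : x * exp (-(σ * x / s)) ≤ s / (exp 1 * σ) := by
    calc x * exp (-(σ * x / s)) = s / σ * (σ * x / s * exp (-(σ * x / s))) := by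
          field_simp
      _ ≤ s / σ * exp (-1) := by gcongr; exact mul_exp_neg_le_exp_neg_one _
      _ = s / (exp 1 * σ) := by rw [exp_neg]; field_simp
  rw [hsplit]
  gcongr

lemma rpow_mul_exp_neg_half_mul_le {s a t : ℝ} (hs : 0 < s) (ha : 1 ≤ a) (ht : 1 ≤ t) :
    a ^ s * exp (-(t / 2 * a)) ≤ (4 * s / exp 1) ^ s * exp (-(t / 4)) := by
  have hquarter : a ^ s * exp (-(t / 4 * a)) ≤ (4 * s / exp 1) ^ s :=
    calc a ^ s * exp (-(t / 4 * a)) ≤ (s / (exp 1 * (t / 4))) ^ s :=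
          rpow_mul_exp_neg_mul_le hs (by positivity) (by positivity)
      _ ≤ (4 * s / exp 1) ^ s := by
          refine rpow_le_rpow (by positivity) ?_ hs.le
          rw [div_le_div_iff₀ (by positivity) (exp_pos 1)]
          nlinarith [mul_nonneg (mul_nonneg hs.le (exp_pos 1).le) (sub_nonneg.2 ht)]
  calc a ^ s * exp (-(t / 2 * a)) = a ^ s * exp (-(t / 4 * a)) * exp (-(t / 4 * a)) := by
        rw [mul_assoc, ← exp_add]; ring_nf
    _ ≤ (4 * s / exp 1) ^ s * exp (-(t / 4)) := by
        gcongr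
        nlinarith

lemma half_mul_exp_neg_quarter_le {lam t : ℝ} (hlam : 0 ≤ lam) (ht : -1 < t) :
    t / 2 * exp (-(t / 4)) ≤
      exp (1 / 4) * 2 ^ lam * ((lam + 1) / (exp 1 * (1 / 2))) ^ (lam + 1) * (1 + t) ^ (-lam) := by
  have h1t : 0 < 1 + t := by linarith
  calc t / 2 * exp (-(t / 4))
      ≤ exp (1 / 4) / 2 * ((1 + t) ^ (lam + 1) * exp (-(1 / 4 * (1 + t)))) *
          (1 + t) ^ (-lam) := by
        have hpow : (1 + t) ^ (lam + 1) * (1 + t) ^ (-lam) = 1 + t := by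
          rw [← rpow_add h1t]; simp
        have hexp : exp (1 / 4) * exp (-(1 / 4 * (1 + t))) = exp (-(t / 4)) := by
          rw [← exp_add]; ring_nf
        calc t / 2 * exp (-(t / 4)) ≤ (1 + t) / 2 * exp (-(t / 4)) := by gcongr; linarith
          _ = _ := by
            linear_combination
              (-(1 + t) / 2) * hexp - exp (1 / 4) * exp (-(1 / 4 * (1 + t))) / 2 * hpow
    _ ≤ exp (1 / 4) / 2 * ((lam + 1) / (exp 1 * (1 / 4))) ^ (lam + 1) * (1 + t) ^ (-lam) := by
        gcongr
        exact rpow_mul_exp_neg_mul_le (by linarith) (by norm_num) h1t.le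
    _ = exp (1 / 4) * 2 ^ lam * ((lam + 1) / (exp 1 * (1 / 2))) ^ (lam + 1) * (1 + t) ^ (-lam) := by
        rw [show (lam + 1) / (exp 1 * (1 / 4)) = 2 * ((lam + 1) / (exp 1 * (1 / 2))) by ring,
          mul_rpow (by norm_num) (by positivity), rpow_add_one two_ne_zero]
        ring

lemma exp_quarter_mul_le_d₁ {lam : ℝ} (hlam : 0 ≤ lam) :
    exp (1 / 4) * 2 ^ lam * ((lam + 1) / (exp 1 * (1 / 2))) ^ (lam + 1) ≤
      exp (-(1 / 4)) * 2 ^ lam * d₁ lam (1 / 2) := by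
  have hsplit : exp (1 / 4) = exp (-(1 / 4)) * exp (1 / 2) := by rw [← exp_add]; norm_num
  calc exp (1 / 4) * 2 ^ lam * ((lam + 1) / (exp 1 * (1 / 2))) ^ (lam + 1)
      ≤ 2 ^ lam * (exp (1 / 4) * 2 ^ lam * ((lam + 1) / (exp 1 * (1 / 2))) ^ (lam + 1)) :=
        le_mul_of_one_le_left (by positivity) (one_le_rpow one_le_two hlam)
    _ = exp (-(1 / 4)) * 2 ^ lam *
          (2 ^ lam * (((lam + 1) / (exp 1 * (1 / 2))) ^ (lam + 1) * exp (1 / 2))) := by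
        rw [hsplit]; ring
    _ ≤ exp (-(1 / 4)) * 2 ^ lam * d₁ lam (1 / 2) := by
        unfold d₁
        gcongr
        exact le_add_of_nonneg_right (by norm_num)

lemma integral_rpow_mul_exp_mul_abs_le {s lam M a t : ℝ} {f : ℝ → ℝ} (hlam : 0 ≤ lam)
    (hM : 0 ≤ M) (ha : 0 ≤ a) (ht : 0 ≤ t)
    (hfb : ∀ᵐ τ ∂(volume : Measure ℝ), 0 ≤ τ → |f τ| ≤ M * (1 + τ) ^ (-lam)) :
    ∫ τ in (0 : ℝ)..(t / 2), a ^ s * exp (-((t - τ) * a)) * |f τ| ≤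
      a ^ s * exp (-(t / 2 * a)) * M * (t / 2) := by
  have hbound : ∀ᵐ τ ∂(volume : Measure ℝ), τ ∈ Set.uIoc 0 (t / 2) →
      ‖a ^ s * exp (-((t - τ) * a)) * |f τ|‖ ≤ a ^ s * exp (-(t / 2 * a)) * M := by
    filter_upwards [hfb] with τ hτ hmem
    rw [Set.uIoc_of_le (by positivity)] at hmem
    have hfM : |f τ| ≤ M :=
      (hτ hmem.1.le).trans <| mul_le_of_le_one_right hM <|
        rpow_le_one_of_one_le_of_nonpos (by linarith [hmem.1]) (neg_nonpos.2 hlam)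
    rw [Real.norm_of_nonneg (by positivity)]
    gcongr
    nlinarith [hmem.2]
  calc ∫ τ in (0 : ℝ)..(t / 2), a ^ s * exp (-((t - τ) * a)) * |f τ|
      ≤ ‖∫ τ in (0 : ℝ)..(t / 2), a ^ s * exp (-((t - τ) * a)) * |f τ|‖ :=
        le_abs_self _
    _ ≤ a ^ s * exp (-(t / 2 * a)) * M * |t / 2 - 0| :=
        norm_integral_le_of_norm_le_const_ae hbound
    _ = a ^ s * exp (-(t / 2 * a)) * M * (t / 2) := by rw [sub_zero, abs_of_nonneg (by positivity)]

theorem stmt6_general (ε lam M : ℝ) (hε : ε ∈ Set.Ioo (0:ℝ) 1) (hlam : 0 < lam) (hM : 0 < M)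
    (f : ℝ → ℝ)
    (hfb : ∀ᵐ τ ∂(volume : Measure ℝ), 0 ≤ τ → |f τ| ≤ M * (1 + τ) ^ (-lam)) :
    ∀ a : ℝ, 1 ≤ a → ∀ t : ℝ, 1 ≤ t →
      (∫ τ in (0:ℝ)..(t/2), a ^ (1 - ε) * Real.exp (-((t - τ) * a)) * |f τ|)
        ≤ M * (4 * (1 - ε) / Real.exp 1) ^ (1 - ε) * Real.exp (-(1/4)) * (2:ℝ) ^ lam
            * ((2:ℝ) ^ lam * (((lam + 1) / (Real.exp 1 * (1/2))) ^ (lam + 1)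
                * Real.exp (1/2) + 1 / (1/2)))
            * (1 + t) ^ (-lam) := by
  intro a ha t ht
  have hs : 0 < 1 - ε := sub_pos.2 hε.2
  calc ∫ τ in (0:ℝ)..(t/2), a ^ (1 - ε) * exp (-((t - τ) * a)) * |f τ|
      ≤ a ^ (1 - ε) * exp (-(t / 2 * a)) * M * (t / 2) :=
        integral_rpow_mul_exp_mul_abs_le hlam.le hM.le (by linarith) (by linarith) hfb
    _ ≤ (4 * (1 - ε) / exp 1) ^ (1 - ε) * exp (-(t / 4)) * M * (t / 2) := by
        gcongr ?_ * _ * _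
        exact rpow_mul_exp_neg_half_mul_le hs ha ht
    _ = M * (4 * (1 - ε) / exp 1) ^ (1 - ε) * (t / 2 * exp (-(t / 4))) := by ring
    _ ≤ M * (4 * (1 - ε) / exp 1) ^ (1 - ε) * (exp (1 / 4) * 2 ^ lam *
          ((lam + 1) / (exp 1 * (1 / 2))) ^ (lam + 1) * (1 + t) ^ (-lam)) := by
        gcongr _ * ?_
        exact half_mul_exp_neg_quarter_le hlam.le (by linarith)
    _ ≤ M * (4 * (1 - ε) / exp 1) ^ (1 - ε) *
          (exp (-(1 / 4)) * 2 ^ lam * d₁ lam (1 / 2) * (1 + t) ^ (-lam)) := by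
        gcongr _ * (?_ * _)
        exact exp_quarter_mul_le_d₁ hlam.le
    _ = _ := by unfold d₁; ring

/-- Let `ε ∈ (0,1)`, `λ > 0`, `M > 0`, and `f` measurable with
`|f τ| ≤ M (1+τ)^{-λ}` for a.e. `τ ≥ 0`. Then for every `a ≥ 1` and every `t ≥ 1`,
`∫_0^{t/2} a^{1-ε} e^{-(t-τ) a} |f τ| dτ
  ≤ M (4(1-ε)/e)^{1-ε} e^{-1/4} 2^λ d₁(λ,1/2) (1+t)^{-λ}`,
where `d₁(λ,σ) = 2^λ [ ((λ+1)/(e σ))^{λ+1} e^σ + 1/σ ]`. -/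
theorem stmt6 (ε lam M : ℝ) (hε : ε ∈ Set.Ioo (0:ℝ) 1) (hlam : 0 < lam) (hM : 0 < M)
    (f : ℝ → ℝ) (hf : Measurable f)
    (hfb : ∀ᵐ τ ∂(volume : Measure ℝ), 0 ≤ τ → |f τ| ≤ M * (1 + τ) ^ (-lam)) :
    ∀ a : ℝ, 1 ≤ a → ∀ t : ℝ, 1 ≤ t →
      (∫ τ in (0:ℝ)..(t/2), a ^ (1 - ε) * Real.exp (-((t - τ) * a)) * |f τ|)
        ≤ M * (4 * (1 - ε) / Real.exp 1) ^ (1 - ε) * Real.exp (-(1/4)) * (2:ℝ) ^ lam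
            * ((2:ℝ) ^ lam * (((lam + 1) / (Real.exp 1 * (1/2))) ^ (lam + 1)
                * Real.exp (1/2) + 1 / (1/2)))
            * (1 + t) ^ (-lam) :=
  stmt6_general ε lam M hε hlam hM f hfb
end

section
/- Let $\varepsilon \in (0,1)$, $\lambda > 0$, $M > 0$, $R_0 > 0$ and $X_0 > 0$. Then there exists a constant $C > 0$, depending only on $\varepsilon$, $\lambda$, $M$, $R_0$ and $X_0$ (in particular independent of $a$), such that the following holds: for every real $a \ge 1$, every $w_0, \xi \in \mathbb{R}$ with $|w_0| \le R_0$ and $|\xi| \le X_0$, and every measurable $f : [0,\infty) \to \mathbb{R}$ with $|f(\tau)| \le M(1+\tau)^{-\lambda}$ for almost every $\tau$, the function $w(t) = e^{-ta} w_0 + a^{-1}(1 - e^{-ta}) \xi + \int_0^t e^{-(t-\tau)a} f(\tau)\, d\tau$ satisfies $a^{1-\varepsilon} \, \big| w(t) - a^{-1} \xi \big| \le C (1+t)^{-\lambda}$ for all $t \ge 1$. -/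
open Real MeasureTheory intervalIntegral

/-!
Write `w t - ξ / a = e^{-ta} (w₀ - ξ / a) + ∫₀ᵗ e^{-(t-τ)a} f τ dτ`. Since `a^{1-ε} ≤ a`, it suffices
to bound `a` times each piece. Split the Duhamel integral at `τ = t/2`: on `[0, t/2]` the kernel is
at most `e^{-ta/2}`, while on `[t/2, t]` the forcing is at most `2^λ M (1+t)^{-λ}` and the kernel
integrates to at most `1/a`, which absorbs the factor `a`. Every remaining term is a multiple of
`s e^{-s/2}` with `s = ta ≥ t`, and `s^{1+λ} e^{-s/2}` is bounded, so these decay like `(1+t)^{-λ}`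
uniformly in `a ≥ 1`.
-/

lemma rpow_mul_exp_neg_le_rpow_self {p x : ℝ} (hp : 0 < p) (hx : 0 ≤ x) :
    x ^ p * exp (-x) ≤ p ^ p := by
  have hxp : (x / p) ^ p ≤ exp x :=
    calc (x / p) ^ p ≤ exp (x / p) ^ p := by
          gcongr
          linarith [add_one_le_exp (x / p)]
      _ = exp x := by rw [← exp_mul, div_mul_cancel₀ x hp.ne']
  rw [div_rpow hx hp.le, div_le_iff₀ (by positivity)] at hxp
  calc x ^ p * exp (-x) ≤ exp x * p ^ p * exp (-x) := by gcongr
    _ = p ^ p := by rw [mul_comm, ← mul_assoc, ← exp_add, neg_add_cancel, exp_zero, one_mul]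

lemma mul_exp_neg_half_le_rpow_neg {lam s t : ℝ} (hlam : 0 ≤ lam) (ht : 1 ≤ t) (hts : t ≤ s) :
    s * exp (-(s / 2)) ≤ (4 * (1 + lam)) ^ (1 + lam) * (1 + t) ^ (-lam) := by
  have hs : 0 < s := by linarith
  have h1t : 0 < 1 + t := by linarith
  have hgrowth : s * (1 + t) ^ lam ≤ 4 ^ (1 + lam) * (s / 2) ^ (1 + lam) :=
    calc s * (1 + t) ^ lam ≤ (2 * s) ^ (1 : ℝ) * (2 * s) ^ lam := by
          rw [rpow_one]; gcongr <;> linarith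
      _ = (4 * (s / 2)) ^ (1 + lam) := by rw [← rpow_add (by positivity)]; ring_nf
      _ = 4 ^ (1 + lam) * (s / 2) ^ (1 + lam) := mul_rpow (by norm_num) (by positivity)
  rw [rpow_neg h1t.le, ← div_eq_mul_inv, le_div_iff₀ (by positivity),
    mul_rpow (by norm_num) (by positivity)]
  calc s * exp (-(s / 2)) * (1 + t) ^ lam = s * (1 + t) ^ lam * exp (-(s / 2)) := by ring
    _ ≤ 4 ^ (1 + lam) * (s / 2) ^ (1 + lam) * exp (-(s / 2)) := by gcongr
    _ ≤ 4 ^ (1 + lam) * (1 + lam) ^ (1 + lam) := by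
        rw [mul_assoc]
        gcongr
        exact rpow_mul_exp_neg_le_rpow_self (by linarith) (by positivity)

lemma integral_exp_neg_sub_mul {a : ℝ} (ha : a ≠ 0) (t : ℝ) :
    ∫ τ in (0 : ℝ)..t, exp (-((t - τ) * a)) = (1 - exp (-(t * a))) / a := by
  have hderiv : ∀ τ ∈ Set.uIcc 0 t,
      HasDerivAt (fun τ => exp (-((t - τ) * a)) / a) (exp (-((t - τ) * a))) τ := by
    intro τ _
    have h : HasDerivAt (fun τ => -((t - τ) * a)) a τ := by
      simpa using (((hasDerivAt_id τ).const_sub t).mul_const a).fun_neg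
    simpa [ha] using h.exp.div_const a
  rw [integral_eq_sub_of_hasDerivAt hderiv ((by fun_prop : Continuous _).intervalIntegrable _ _)]
  simp [sub_div]

lemma exp_neg_sub_mul_mul_rpow_neg_le {a lam t τ : ℝ} (ha : 0 ≤ a) (hlam : 0 ≤ lam) (hτ : 0 ≤ τ)
    (hτt : τ ≤ t) :
    exp (-((t - τ) * a)) * (1 + τ) ^ (-lam)
      ≤ exp (-(t * a / 2)) + 2 ^ lam * (1 + t) ^ (-lam) * exp (-((t - τ) * a)) := by
  have ht : 0 ≤ t := hτ.trans hτt
  rcases le_total τ (t / 2) with hτ2 | hτ2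
  · have hk : exp (-((t - τ) * a)) ≤ exp (-(t * a / 2)) := by gcongr; nlinarith
    have hr : (1 + τ) ^ (-lam) ≤ 1 := rpow_le_one_of_one_le_of_nonpos (by linarith) (by linarith)
    calc exp (-((t - τ) * a)) * (1 + τ) ^ (-lam) ≤ exp (-(t * a / 2)) * 1 := by gcongr
      _ ≤ _ := by rw [mul_one]; exact le_add_of_nonneg_right (by positivity)
  · have hr : (1 + τ) ^ (-lam) ≤ 2 ^ lam * (1 + t) ^ (-lam) :=
      calc (1 + τ) ^ (-lam) ≤ ((1 + t) / 2) ^ (-lam) :=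
            rpow_le_rpow_of_nonpos (by positivity) (by linarith) (by linarith)
        _ = 2 ^ lam * (1 + t) ^ (-lam) := by
            rw [div_rpow (by linarith) (by norm_num), rpow_neg (by norm_num : (0:ℝ) ≤ 2),
              div_inv_eq_mul, mul_comm]
    calc exp (-((t - τ) * a)) * (1 + τ) ^ (-lam)
        ≤ exp (-((t - τ) * a)) * (2 ^ lam * (1 + t) ^ (-lam)) := by gcongr
      _ ≤ _ := by rw [mul_comm]; exact le_add_of_nonneg_left (by positivity)

lemma abs_integral_exp_neg_sub_mul_mul_le {a lam M t : ℝ} {f : ℝ → ℝ} (ha : 0 < a) (hlam : 0 ≤ lam)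
    (hM : 0 ≤ M) (ht : 0 ≤ t) (hf : ∀ᵐ τ, 0 ≤ τ → |f τ| ≤ M * (1 + τ) ^ (-lam)) :
    |∫ τ in (0 : ℝ)..t, exp (-((t - τ) * a)) * f τ|
      ≤ M * t * exp (-(t * a / 2)) + M * 2 ^ lam * (1 + t) ^ (-lam) / a := by
  set B := M * 2 ^ lam * (1 + t) ^ (-lam)
  have hbound : ∀ᵐ τ, τ ∈ Set.Ioc 0 t →
      ‖exp (-((t - τ) * a)) * f τ‖ ≤ M * exp (-(t * a / 2)) + B * exp (-((t - τ) * a)) := by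
    filter_upwards [hf] with τ hfτ hτ
    rw [norm_mul, norm_of_nonneg (exp_pos _).le, Real.norm_eq_abs]
    calc exp (-((t - τ) * a)) * |f τ| ≤ M * (exp (-((t - τ) * a)) * (1 + τ) ^ (-lam)) := by
          rw [mul_left_comm]; gcongr; exact hfτ hτ.1.le
      _ ≤ M * (exp (-(t * a / 2)) + 2 ^ lam * (1 + t) ^ (-lam) * exp (-((t - τ) * a))) := by
          gcongr; exact exp_neg_sub_mul_mul_rpow_neg_le ha.le hlam hτ.1.le hτ.2
      _ = M * exp (-(t * a / 2)) + B * exp (-((t - τ) * a)) := by ring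
  have hB : 0 ≤ B := by positivity
  calc |∫ τ in (0 : ℝ)..t, exp (-((t - τ) * a)) * f τ|
      ≤ ∫ τ in (0 : ℝ)..t, (M * exp (-(t * a / 2)) + B * exp (-((t - τ) * a))) :=
        norm_integral_le_of_norm_le ht hbound ((by fun_prop : Continuous _).intervalIntegrable _ _)
    _ = M * t * exp (-(t * a / 2)) + B * ((1 - exp (-(t * a))) / a) := by
        rw [integral_add intervalIntegrable_const
            ((by fun_prop : Continuous _).intervalIntegrable _ _),
          intervalIntegral.integral_const, intervalIntegral.integral_const_mul,
          integral_exp_neg_sub_mul ha.ne']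
        simp only [sub_zero, smul_eq_mul]
        ring
    _ ≤ M * t * exp (-(t * a / 2)) + B / a := by
        gcongr
        rw [mul_div_assoc']
        gcongr
        exact mul_le_of_le_one_right hB (by linarith [exp_pos (-(t * a))])

lemma abs_sub_inv_mul_le {a w ξ R X : ℝ} (ha : 1 ≤ a) (hw : |w| ≤ R) (hξ : |ξ| ≤ X) :
    |w - a⁻¹ * ξ| ≤ R + X :=
  calc |w - a⁻¹ * ξ| ≤ |w| + |a⁻¹ * ξ| := abs_sub _ _
    _ ≤ R + X := by
        gcongr
        rw [abs_mul, abs_of_pos (inv_pos.mpr (zero_lt_one.trans_le ha))]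
        exact (mul_le_of_le_one_left (abs_nonneg ξ) (inv_le_one_of_one_le₀ ha)).trans hξ

lemma mul_exp_neg_mul_le_mul_exp_neg_half {a t : ℝ} (ha : 0 ≤ a) (ht : 1 ≤ t) :
    a * exp (-(t * a)) ≤ t * a * exp (-(t * a / 2)) := by
  rw [mul_assoc]
  calc a * exp (-(t * a)) ≤ 1 * (a * exp (-(t * a / 2))) := by rw [one_mul]; gcongr; nlinarith
    _ ≤ t * (a * exp (-(t * a / 2))) := by gcongr

/-- Scalar linear-asymptotics lemma: for `ε ∈ (0,1)`, `λ > 0`, `M > 0`, `R₀ > 0`, `X₀ > 0`,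
there is `C > 0` (independent of `a`) such that for every `a ≥ 1`, every `w₀, ξ` with
`|w₀| ≤ R₀`, `|ξ| ≤ X₀`, and every measurable `f` with `|f τ| ≤ M (1+τ)^{-λ}` a.e.,
the mild solution `w t = e^{-t a} w₀ + a⁻¹ (1 - e^{-t a}) ξ + ∫_0^t e^{-(t-τ) a} f τ dτ`
satisfies `a^{1-ε} |w t - a⁻¹ ξ| ≤ C (1+t)^{-λ}` for all `t ≥ 1`. -/
theorem stmt8 (ε lam M R₀ X₀ : ℝ) (hε : ε ∈ Set.Ioo (0:ℝ) 1) (hlam : 0 < lam)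
    (hM : 0 < M) (hR₀ : 0 < R₀) (hX₀ : 0 < X₀) :
    ∃ C : ℝ, 0 < C ∧
      ∀ a : ℝ, 1 ≤ a → ∀ w₀ ξ : ℝ, |w₀| ≤ R₀ → |ξ| ≤ X₀ →
        ∀ f : ℝ → ℝ, Measurable f →
          (∀ᵐ τ ∂(volume : Measure ℝ), 0 ≤ τ → |f τ| ≤ M * (1 + τ) ^ (-lam)) →
          ∀ t : ℝ, 1 ≤ t →
            a ^ (1 - ε) *
              |(Real.exp (-(t * a)) * w₀ + a⁻¹ * (1 - Real.exp (-(t * a))) * ξ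
                  + ∫ τ in (0:ℝ)..t, Real.exp (-((t - τ) * a)) * f τ)
                - a⁻¹ * ξ|
              ≤ C * (1 + t) ^ (-lam) := by
  refine ⟨(R₀ + X₀ + M) * (4 * (1 + lam)) ^ (1 + lam) + M * 2 ^ lam, by positivity, ?_⟩
  intro a ha w₀ ξ hw₀ hξ f _ hf t ht
  have ha₀ : 0 < a := by linarith
  have hpow : a ^ (1 - ε) ≤ a := rpow_le_self_of_one_le ha (by linarith [hε.1])
  have hforced := abs_integral_exp_neg_sub_mul_mul_le ha₀ hlam.le hM.le (zero_le_one.trans ht) hf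
  have hexp := mul_exp_neg_mul_le_mul_exp_neg_half ha₀.le ht
  have hdecay := mul_exp_neg_half_le_rpow_neg hlam.le ht (le_mul_of_one_le_right (by linarith) ha)
  calc a ^ (1 - ε) * |(exp (-(t * a)) * w₀ + a⁻¹ * (1 - exp (-(t * a))) * ξ
          + ∫ τ in (0:ℝ)..t, exp (-((t - τ) * a)) * f τ) - a⁻¹ * ξ|
      = a ^ (1 - ε) * |exp (-(t * a)) * (w₀ - a⁻¹ * ξ)
          + ∫ τ in (0:ℝ)..t, exp (-((t - τ) * a)) * f τ| := by ring_nf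
    _ ≤ a * (exp (-(t * a)) * (R₀ + X₀)
          + (M * t * exp (-(t * a / 2)) + M * 2 ^ lam * (1 + t) ^ (-lam) / a)) := by
        gcongr
        refine (abs_add_le _ _).trans (add_le_add ?_ hforced)
        rw [abs_mul, abs_of_pos (exp_pos _)]
        gcongr
        exact abs_sub_inv_mul_le ha hw₀ hξ
    _ = (R₀ + X₀) * (a * exp (-(t * a))) + M * (t * a * exp (-(t * a / 2)))
          + M * 2 ^ lam * (1 + t) ^ (-lam) := by
        field_simp
        ring
    _ ≤ (R₀ + X₀ + M) * (t * a * exp (-(t * a / 2))) + M * 2 ^ lam * (1 + t) ^ (-lam) := by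
        linarith [mul_le_mul_of_nonneg_left hexp (by positivity : (0 : ℝ) ≤ R₀ + X₀)]
    _ ≤ ((R₀ + X₀ + M) * (4 * (1 + lam)) ^ (1 + lam) + M * 2 ^ lam) * (1 + t) ^ (-lam) := by
        linarith [mul_le_mul_of_nonneg_left hdecay (by positivity : (0 : ℝ) ≤ R₀ + X₀ + M)]
end

section
/- Let $\mu > 0$, $M \ge 0$ and $y_0 \ge 0$. Suppose $y : [0,\infty) \to [0,\infty)$ and $g : [0,\infty) \to [0,\infty)$ are measurable, $g(\tau) \le M^2 (1+\tau)^{-2\mu}$ for almost every $\tau \ge 0$, and $y(t) \le e^{-t} y_0 + \int_0^t e^{-(t-\tau)} g(\tau) \, d\tau$ for all $t \ge 0$. Then $y(t) \le \big( y_0 \, d_0(2\mu,1)\, e + M^2 \, d_1(2\mu, 1) \big) (1+t)^{-2\mu}$ for all $t \ge 0$, where $d_0(2\mu,1) = (2\mu/e)^{2\mu}$ and $d_1(2\mu,1) = 2^{2\mu} \big[ ((2\mu+1)/e)^{2\mu+1} e + 1 \big]$. -/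
open Real MeasureTheory intervalIntegral

/- Everything rests on `x^β e^{-x} ≤ (β/e)^β`, i.e. `u + 1 ≤ eᵘ` at `u = x/β - 1` raised to the
power `β`. With `β = 2μ` it bounds the free decay `e^{-t}`. For the forced part, split
`∫₀ᵗ e^{-(t-τ)} (1+τ)^{-2μ} dτ` at `t/2`: on `[0, t/2]` the kernel is at most `e^{-t/2}`, and
`(t/2) e^{-t/2}` is handled with `β = 2μ + 1`; on `[t/2, t]` the weight is at most
`(1+t/2)^{-2μ} ≤ 2^{2μ} (1+t)^{-2μ}` and the kernel integrates to at most `1`. -/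

theorem rpow_le_div_exp_one_rpow_mul_exp {β x : ℝ} (hβ : 0 < β) (hx : 0 ≤ x) :
    x ^ β ≤ (β / exp 1) ^ β * exp x := by
  have hlin : x / β ≤ exp (x / β - 1) := by linarith [add_one_le_exp (x / β - 1)]
  calc x ^ β = β ^ β * (x / β) ^ β := by
        rw [div_rpow hx hβ.le]; field_simp
    _ ≤ β ^ β * exp (x / β - 1) ^ β := by gcongr
    _ = (β / exp 1) ^ β * exp x := by
        rw [← exp_mul, div_rpow hβ.le (exp_pos 1).le, exp_one_rpow, div_mul_eq_mul_div,
          eq_div_iff (exp_pos β).ne', mul_assoc, ← exp_add]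
        congr 2
        field_simp
        ring

theorem exp_neg_le_rpow_neg {β x : ℝ} (hβ : 0 < β) (hx : 0 < x) :
    exp (-x) ≤ (β / exp 1) ^ β * x ^ (-β) := by
  rw [rpow_neg hx.le, exp_neg, ← div_eq_mul_inv, le_div_iff₀ (by positivity),
    inv_mul_le_iff₀ (exp_pos x), mul_comm]
  exact rpow_le_div_exp_one_rpow_mul_exp hβ hx.le

theorem div_two_rpow_neg {s : ℝ} (hs : 0 ≤ s) (α : ℝ) :
    (s / 2) ^ (-α) = 2 ^ α * s ^ (-α) := by
  rw [div_rpow hs zero_le_two, rpow_neg zero_le_two, div_inv_eq_mul, mul_comm]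

theorem intervalIntegrable_exp_mul_one_add_rpow (t α : ℝ) {a b : ℝ} (ha : -1 < a)
    (hb : -1 < b) :
    IntervalIntegrable (fun τ => exp (-(t - τ)) * (1 + τ) ^ (-α)) volume a b := by
  refine ContinuousOn.intervalIntegrable ?_
  refine (by fun_prop : Continuous fun τ : ℝ => exp (-(t - τ))).continuousOn.mul ?_
  refine ContinuousOn.rpow_const (by fun_prop) fun τ hτ => Or.inl ?_
  have hτ_ge : min a b ≤ τ := hτ.1
  have hmin : -1 < min a b := lt_min ha hb
  exact (by linarith : 0 < 1 + τ).ne'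

section Kernel

variable {α t : ℝ}

theorem integral_exp_mul_one_add_rpow_le_head (hα : 0 ≤ α) (ht : 0 ≤ t) :
    ∫ τ in (0 : ℝ)..t / 2, exp (-(t - τ)) * (1 + τ) ^ (-α) ≤ t / 2 * exp (-(t / 2)) := by
  calc ∫ τ in (0 : ℝ)..t / 2, exp (-(t - τ)) * (1 + τ) ^ (-α)
      ≤ ∫ _ in (0 : ℝ)..t / 2, exp (-(t / 2)) := by
        refine integral_mono_on (by linarith)
          (intervalIntegrable_exp_mul_one_add_rpow t α (by norm_num) (by linarith))
          intervalIntegrable_const fun τ hτ => ?_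
        have hweight : (1 + τ) ^ (-α) ≤ 1 :=
          rpow_le_one_of_one_le_of_nonpos (by linarith [hτ.1]) (by linarith)
        exact (mul_le_of_le_one_right (exp_pos _).le hweight).trans
          (exp_le_exp.2 (by linarith [hτ.2]))
    _ = t / 2 * exp (-(t / 2)) := by simp

theorem mul_exp_neg_half_le (hα : 0 ≤ α) (ht : 0 ≤ t) :
    t / 2 * exp (-(t / 2)) ≤
      2 ^ α * (((α + 1) / exp 1) ^ (α + 1) * exp 1) * (1 + t) ^ (-α) := by
  set x := (1 + t) / 2 with hx_def
  have hx : 0 < x := by positivity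
  calc t / 2 * exp (-(t / 2)) ≤ x * exp (1 + -x) := by
        gcongr
        · linarith [hx_def]
        · linarith [hx_def]
    _ = exp 1 * (x * exp (-x)) := by rw [exp_add]; ring
    _ ≤ exp 1 * (x * (((α + 1) / exp 1) ^ (α + 1) * x ^ (-(α + 1)))) := by
        gcongr
        exact exp_neg_le_rpow_neg (by linarith) hx
    _ = ((α + 1) / exp 1) ^ (α + 1) * exp 1 * x ^ (-α) := by
        rw [neg_add, rpow_add hx, rpow_neg_one]
        field_simp
    _ = 2 ^ α * (((α + 1) / exp 1) ^ (α + 1) * exp 1) * (1 + t) ^ (-α) := by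
        rw [div_two_rpow_neg (by linarith)]
        ring

theorem integral_exp_mul_one_add_rpow_le_tail (hα : 0 ≤ α) (ht : 0 ≤ t) :
    ∫ τ in t / 2..t, exp (-(t - τ)) * (1 + τ) ^ (-α) ≤ (1 + t / 2) ^ (-α) := by
  have hkernel : ∫ τ in t / 2..t, exp (-(t - τ)) = 1 - exp (-(t / 2)) := by
    simp only [neg_sub]
    rw [integral_comp_sub_right exp, integral_exp, sub_self, exp_zero]
    ring_nf
  calc ∫ τ in t / 2..t, exp (-(t - τ)) * (1 + τ) ^ (-α)
      ≤ ∫ τ in t / 2..t, exp (-(t - τ)) * (1 + t / 2) ^ (-α) := by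
        refine integral_mono_on (by linarith)
          (intervalIntegrable_exp_mul_one_add_rpow t α (by linarith) (by linarith))
          ((by fun_prop : Continuous fun τ : ℝ => exp (-(t - τ))).intervalIntegrable _ _
            |>.mul_const _) fun τ hτ => ?_
        refine mul_le_mul_of_nonneg_left ?_ (exp_pos _).le
        exact rpow_le_rpow_of_nonpos (by linarith) (by linarith [hτ.1]) (by linarith)
    _ = (1 - exp (-(t / 2))) * (1 + t / 2) ^ (-α) := by
        rw [intervalIntegral.integral_mul_const, hkernel]
    _ ≤ (1 + t / 2) ^ (-α) :=
        mul_le_of_le_one_left (rpow_nonneg (by linarith) _) (by linarith [exp_pos (-(t / 2))])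

theorem integral_exp_mul_one_add_rpow_le (hα : 0 ≤ α) (ht : 0 ≤ t) :
    ∫ τ in (0 : ℝ)..t, exp (-(t - τ)) * (1 + τ) ^ (-α) ≤
      2 ^ α * (((α + 1) / exp 1) ^ (α + 1) * exp 1 + 1) * (1 + t) ^ (-α) := by
  have hhalf : (1 + t / 2) ^ (-α) ≤ 2 ^ α * (1 + t) ^ (-α) := by
    rw [← div_two_rpow_neg (by linarith)]
    exact rpow_le_rpow_of_nonpos (by positivity) (by linarith) (by linarith)
  rw [← integral_add_adjacent_intervals (b := t / 2)
    (intervalIntegrable_exp_mul_one_add_rpow t α (by norm_num) (by linarith))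
    (intervalIntegrable_exp_mul_one_add_rpow t α (by linarith) (by linarith))]
  linarith [integral_exp_mul_one_add_rpow_le_head hα ht, mul_exp_neg_half_le hα ht,
    integral_exp_mul_one_add_rpow_le_tail hα ht]

theorem integral_exp_mul_le_of_ae_le {g : ℝ → ℝ} {C : ℝ} (ht : 0 ≤ t)
    (hg_nonneg : ∀ τ, 0 ≤ τ → 0 ≤ g τ)
    (hg_le : ∀ᵐ τ ∂volume, 0 ≤ τ → g τ ≤ C * (1 + τ) ^ (-α)) :
    ∫ τ in (0 : ℝ)..t, exp (-(t - τ)) * g τ ≤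
      C * ∫ τ in (0 : ℝ)..t, exp (-(t - τ)) * (1 + τ) ^ (-α) := by
  rw [← intervalIntegral.integral_const_mul, integral_of_le ht, integral_of_le ht]
  -- a nonnegative integrand that is not integrable has integral `0`, so no measurability is needed
  refine integral_mono_of_nonneg ?_
    ((intervalIntegrable_exp_mul_one_add_rpow t α (by norm_num) (by linarith)).const_mul C).1
    ?_
  · filter_upwards [ae_restrict_mem measurableSet_Ioc] with τ hτ
    exact mul_nonneg (exp_pos _).le (hg_nonneg τ hτ.1.le)
  · filter_upwards [ae_restrict_of_ae hg_le, ae_restrict_mem measurableSet_Ioc] with τ hgτ hτ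
    calc exp (-(t - τ)) * g τ ≤ exp (-(t - τ)) * (C * (1 + τ) ^ (-α)) := by
          gcongr
          exact hgτ hτ.1.le
      _ = C * (exp (-(t - τ)) * (1 + τ) ^ (-α)) := by ring

end Kernel

theorem stmt11_general (μ M y₀ : ℝ) (hμ : 0 < μ) (hy₀ : 0 ≤ y₀)
    (y g : ℝ → ℝ)
    (hgnn : ∀ t : ℝ, 0 ≤ t → 0 ≤ g t)
    (hgb : ∀ᵐ τ ∂(volume : Measure ℝ), 0 ≤ τ → g τ ≤ M ^ 2 * (1 + τ) ^ (-(2 * μ)))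
    (hint : ∀ t : ℝ, 0 ≤ t →
      y t ≤ Real.exp (-t) * y₀ + ∫ τ in (0:ℝ)..t, Real.exp (-(t - τ)) * g τ) :
    ∀ t : ℝ, 0 ≤ t →
      y t ≤ (y₀ * ((2 * μ / Real.exp 1) ^ (2 * μ) * Real.exp 1)
              + M ^ 2 * ((2:ℝ) ^ (2 * μ)
                  * (((2 * μ + 1) / Real.exp 1) ^ (2 * μ + 1) * Real.exp 1 + 1)))
            * (1 + t) ^ (-(2 * μ)) := by
  intro t ht
  have hfree : exp (-t) ≤ (2 * μ / exp 1) ^ (2 * μ) * exp 1 * (1 + t) ^ (-(2 * μ)) := by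
    calc exp (-t) = exp 1 * exp (-(1 + t)) := by rw [← exp_add]; ring_nf
      _ ≤ exp 1 * ((2 * μ / exp 1) ^ (2 * μ) * (1 + t) ^ (-(2 * μ))) := by
          gcongr
          exact exp_neg_le_rpow_neg (by positivity) (by linarith)
      _ = _ := by ring
  have hforced := (integral_exp_mul_le_of_ae_le ht hgnn hgb).trans
    (mul_le_mul_of_nonneg_left (integral_exp_mul_one_add_rpow_le (by positivity) ht)
      (sq_nonneg M))
  calc y t ≤ exp (-t) * y₀ + ∫ τ in (0 : ℝ)..t, exp (-(t - τ)) * g τ := hint t ht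
    _ ≤ (2 * μ / exp 1) ^ (2 * μ) * exp 1 * (1 + t) ^ (-(2 * μ)) * y₀ + M ^ 2 *
          (2 ^ (2 * μ) * (((2 * μ + 1) / exp 1) ^ (2 * μ + 1) * exp 1 + 1) *
            (1 + t) ^ (-(2 * μ))) :=
        add_le_add (mul_le_mul_of_nonneg_right hfree hy₀) hforced
    _ = _ := by ring

/-- Energy-decay step. Let `μ > 0`, `M ≥ 0`, `y₀ ≥ 0`. Suppose `y, g : [0,∞) → [0,∞)` are
measurable, `g τ ≤ M² (1+τ)^{-2μ}` for a.e. `τ ≥ 0`, and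
`y t ≤ e^{-t} y₀ + ∫_0^t e^{-(t-τ)} g τ dτ` for all `t ≥ 0`. Then
`y t ≤ (y₀ d₀(2μ,1) e + M² d₁(2μ,1)) (1+t)^{-2μ}` for all `t ≥ 0`, where
`d₀(2μ,1) = (2μ/e)^{2μ}` and `d₁(2μ,1) = 2^{2μ} [((2μ+1)/e)^{2μ+1} e + 1]`. -/
theorem stmt11 (μ M y₀ : ℝ) (hμ : 0 < μ) (hM : 0 ≤ M) (hy₀ : 0 ≤ y₀)
    (y g : ℝ → ℝ) (hy : Measurable y) (hg : Measurable g)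
    (hynn : ∀ t : ℝ, 0 ≤ t → 0 ≤ y t) (hgnn : ∀ t : ℝ, 0 ≤ t → 0 ≤ g t)
    (hgb : ∀ᵐ τ ∂(volume : Measure ℝ), 0 ≤ τ → g τ ≤ M ^ 2 * (1 + τ) ^ (-(2 * μ)))
    (hint : ∀ t : ℝ, 0 ≤ t →
      y t ≤ Real.exp (-t) * y₀ + ∫ τ in (0:ℝ)..t, Real.exp (-(t - τ)) * g τ) :
    ∀ t : ℝ, 0 ≤ t →
      y t ≤ (y₀ * ((2 * μ / Real.exp 1) ^ (2 * μ) * Real.exp 1)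
              + M ^ 2 * ((2:ℝ) ^ (2 * μ)
                  * (((2 * μ + 1) / Real.exp 1) ^ (2 * μ + 1) * Real.exp 1 + 1)))
            * (1 + t) ^ (-(2 * μ)) :=
  stmt11_general μ M y₀ hμ hy₀ y g hgnn hgb hint
end
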